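/- Let h : ℝⁿ → ℝⁿ be Lipschitz continuous with constant C > 0, let (x_k)_{k∈ℕ} be a sequence in ℝⁿ, and let (Δ_k)_{k∈ℕ} be nonnegative reals such that ‖x_{k+1} − x_k‖ ≤ Δ_k for all k and Δ_k → 0. Suppose lim inf_{k→∞} ‖h(x_k)‖ = 0 and, for every ε > 0, Σ_{k} 1{‖h(x_k)‖ ≥ ε}·Δ_k < ∞. Then lim_{k→∞} ‖h(x_k)‖ = 0. -/
import Mathlib

open Filter

theorem stmt_13 {n : ℕ} (h : EuclideanSpace ℝ (Fin n) → EuclideanSpace ℝ (Fin n))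
    (C : ℝ) (hC : 0 < C)
    (hlip : ∀ x y : EuclideanSpace ℝ (Fin n), ‖h y - h x‖ ≤ C * ‖y - x‖)
    (x : ℕ → EuclideanSpace ℝ (Fin n)) (Δ : ℕ → ℝ) (hΔ0 : ∀ k, 0 ≤ Δ k)
    (hstep : ∀ k, ‖x (k + 1) - x k‖ ≤ Δ k)
    (hΔto0 : Tendsto Δ atTop (nhds 0))
    (hliminf : liminf (fun k => ‖h (x k)‖) atTop = 0)
    (hsum : ∀ ε : ℝ, 0 < ε →
      Summable (fun k => if ε ≤ ‖h (x k)‖ then Δ k else 0)) :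
    Tendsto (fun k => ‖h (x k)‖) atTop (nhds 0) := by
  set f : ℕ → ℝ := fun k => ‖h (x k)‖ with hf
  rw [Metric.tendsto_atTop]
  by_contra hcon
  push_neg at hcon
  obtain ⟨ε, hε, hfreq⟩ := hcon
  have hfreq' : ∀ N, ∃ k ≥ N, ε ≤ f k := by
    intro N
    obtain ⟨k, hk, hd⟩ := hfreq N
    refine ⟨k, hk, ?_⟩
    have : dist (f k) 0 = f k := by
      simp [Real.dist_eq, abs_of_nonneg (norm_nonneg _), hf]
    linarith
  have hε2 : 0 < ε / 2 := by linarith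
  have hS := hsum (ε / 2) hε2
  set g : ℕ → ℝ := fun k => if ε / 2 ≤ f k then Δ k else 0 with hg
  have hg0 : ∀ k, 0 ≤ g k := by
    intro k; by_cases hh : ε / 2 ≤ f k <;> simp [hg, hh, hΔ0 k]
  set S : ℕ → ℝ := fun m => ∑ j ∈ Finset.range m, g j with hSdef
  have hmono : Monotone S := by
    intro a b hab
    exact Finset.sum_le_sum_of_subset_of_nonneg (Finset.range_subset_range.2 hab)
      (fun i _ _ => hg0 i)
  have hc : CauchySeq S := hS.hasSum.tendsto_sum_nat.cauchySeq
  have hδ : 0 < ε / (2 * C) := by positivity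
  obtain ⟨N, hN⟩ := Metric.cauchySeq_iff'.1 hc (ε / (2 * C)) hδ
  obtain ⟨k, hkN, hkε⟩ := hfreq' N
  -- liminf gives frequently f m < ε/2 (or else f converges, contradiction)
  have hfl : ∃ᶠ m in atTop, f m < ε / 2 := by
    by_contra hcb
    rw [Filter.not_frequently] at hcb
    have hev : ∀ᶠ m in atTop, ε / 2 ≤ f m := hcb.mono (fun m hm => not_lt.1 hm)
    obtain ⟨M, hM⟩ := eventually_atTop.1 hev
    set d : ℕ → ℝ := fun j => if j < M then Δ j else g j with hd
    have hdg : ∀ j, d (j + M) = g (j + M) := by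
      intro j
      simp [hd, Nat.not_lt.2 (Nat.le_add_left M j)]
    have hdsum : Summable d := by
      rw [← summable_nat_add_iff M]
      exact (summable_congr (fun j => (hdg j).symm)).1 (hS.comp_injective (add_left_injective M))
    have hcS : CauchySeq x := by
      apply cauchySeq_of_dist_le_of_summable d _ hdsum
      intro j
      rw [dist_eq_norm, norm_sub_rev]
      by_cases hjM : j < M
      · simpa [hd, hjM] using hstep j
      · have : ε / 2 ≤ f j := hM j (Nat.le_of_not_lt hjM)
        simpa [hd, hjM, hg, this] using hstep j
    obtain ⟨p, hp⟩ := cauchySeq_tendsto_of_complete hcS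
    have hfp : Tendsto f atTop (nhds ‖h p‖) := by
      have htz : Tendsto (fun j => ‖h (x j) - h p‖) atTop (nhds 0) := by
        apply squeeze_zero (fun j => norm_nonneg _) (fun j => hlip p (x j))
        have : Tendsto (fun j => ‖x j - p‖) atTop (nhds 0) :=
          (tendsto_iff_norm_sub_tendsto_zero).1 hp
        simpa using (tendsto_const_nhds.mul this)
      exact (continuous_norm.tendsto (h p)).comp (tendsto_iff_norm_sub_tendsto_zero.2 htz)
    have hlim := hfp.liminf_eq
    rw [hliminf] at hlim
    rw [← hlim] at hfp
    have := (hfp.eventually (gt_mem_nhds hε2)).and hev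
    obtain ⟨j, hj1, hj2⟩ := this.exists
    linarith
  obtain ⟨m0, hm0k, hm0⟩ := (frequently_atTop.1 hfl) (k + 1)
  have hex : ∃ m, k < m ∧ f m < ε / 2 := ⟨m0, hm0k, hm0⟩
  set m := Nat.find hex with hmdef
  obtain ⟨hkm, hfm⟩ := Nat.find_spec hex
  have hmin : ∀ j, j < m → ¬(k < j ∧ f j < ε / 2) := fun j hj => Nat.find_min hex hj
  have hgΔ : ∀ j ∈ Finset.Ico k m, g j = Δ j := by
    intro j hj
    rw [Finset.mem_Ico] at hj
    have : ε / 2 ≤ f j := by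
      rcases eq_or_lt_of_le hj.1 with heq | hlt
      · subst heq; linarith
      · have := hmin j hj.2
        push_neg at this
        exact this hlt
    simp [hg, this]
  -- telescoping distance bound
  have hdist : dist (x k) (x m) ≤ ∑ j ∈ Finset.Ico k m, dist (x j) (x (j + 1)) :=
    dist_le_Ico_sum_dist x (le_of_lt hkm)
  have hsum1 : ∑ j ∈ Finset.Ico k m, dist (x j) (x (j + 1)) ≤ ∑ j ∈ Finset.Ico k m, g j := by
    apply Finset.sum_le_sum
    intro j hj
    rw [hgΔ j hj, dist_comm, dist_eq_norm]
    exact hstep j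
  have hlow : ε / 2 ≤ C * dist (x k) (x m) := by
    have h1 : f k - f m ≤ ‖h (x m) - h (x k)‖ := by
      have := norm_sub_norm_le (h (x k)) (h (x m))
      have h2 : ‖h (x k) - h (x m)‖ = ‖h (x m) - h (x k)‖ := norm_sub_rev _ _
      simp only [hf]; linarith
    have h2 : ‖h (x m) - h (x k)‖ ≤ C * ‖x m - x k‖ := hlip (x k) (x m)
    have h3 : ‖x m - x k‖ = dist (x k) (x m) := by rw [dist_eq_norm, norm_sub_rev]
    have h4 : ε / 2 ≤ f k - f m := by linarith
    rw [← h3]; linarith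
  have hIco : ε / (2 * C) ≤ ∑ j ∈ Finset.Ico k m, g j := by
    have hd := le_trans hdist hsum1
    have : ε / 2 ≤ C * ∑ j ∈ Finset.Ico k m, g j := by nlinarith
    rw [div_le_iff₀ (by positivity)]
    linarith [this]
  have hIcoS : ∑ j ∈ Finset.Ico k m, g j = S m - S k :=
    Finset.sum_Ico_eq_sub g (le_of_lt hkm)
  have hSm : dist (S m) (S N) < ε / (2 * C) := hN m (le_trans hkN (le_of_lt hkm))
  have hSNk : S N ≤ S k := hmono hkN
  have : S m - S N < ε / (2 * C) := by
    have := le_abs_self (S m - S N)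
    rw [Real.dist_eq] at hSm
    linarith
  linarith [hIcoS ▸ hIco]
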